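/- arXiv:1603.09113 — 5 statements merged into one kernel-verified Lean document; each statement's English description precedes it below -/
import Mathlib

section
/- Let (X, d) be a metric space. Suppose that for every upper semicontinuous function u : X → ℝ that is bounded above, and every ε > 0, there exists x_ε ∈ X with u(x_ε) > sup u − ε and u(y) ≤ u(x_ε) + ε·d(x_ε, y) for all y ∈ X. Then X is a complete metric space. (Converse of Ekeland's variational principle, due to Weston and Sullivan.) -/
/-!
For a Cauchy sequence `s`, the asymptotic distance `F x = lim dist x (s n)` is `1`-Lipschitz,
nonnegative, and tends to `0` along `s`. Apply the Ekeland principle to `u = -F` with `ε = 1/2`: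
testing the slope inequality at `y = s n` and letting `n → ∞` gives `0 ≤ -F x + F x / 2`,
so `F x = 0`, i.e. `s n → x`.
-/

open Filter Topology

section AsymptoticDist

variable {X : Type*} [PseudoMetricSpace X] {s : ℕ → X}

/-- Junk unless `s` is Cauchy. -/
noncomputable def asymptoticDist (s : ℕ → X) (x : X) : ℝ :=
  limUnder atTop fun n => dist x (s n)

theorem tendsto_dist_asymptoticDist (hs : CauchySeq s) (x : X) :
    Tendsto (fun n => dist x (s n)) atTop (𝓝 (asymptoticDist s x)) :=
  ((LipschitzWith.dist_right x).uniformContinuous.comp_cauchySeq hs).tendsto_limUnder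

theorem asymptoticDist_nonneg (hs : CauchySeq s) (x : X) : 0 ≤ asymptoticDist s x :=
  ge_of_tendsto' (tendsto_dist_asymptoticDist hs x) fun _ => dist_nonneg

theorem lipschitzWith_asymptoticDist (hs : CauchySeq s) : LipschitzWith 1 (asymptoticDist s) :=
  LipschitzWith.of_le_add fun x y =>
    le_of_tendsto_of_tendsto' (tendsto_dist_asymptoticDist hs x)
      ((tendsto_dist_asymptoticDist hs y).add_const (dist x y)) fun n => by
        linarith [dist_triangle x y (s n)]

theorem tendsto_asymptoticDist_atTop (hs : CauchySeq s) :
    Tendsto (fun n => asymptoticDist s (s n)) atTop (𝓝 0) := by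
  obtain ⟨b, -, hb, hb0⟩ := cauchySeq_iff_le_tendsto_0.mp hs
  have hle : ∀ N, asymptoticDist s (s N) ≤ b N := fun N =>
    le_of_tendsto (tendsto_dist_asymptoticDist hs (s N)) <|
      eventually_atTop.mpr ⟨N, fun m hm => hb N m N le_rfl hm⟩
  exact tendsto_of_tendsto_of_tendsto_of_le_of_le tendsto_const_nhds hb0
    (asymptoticDist_nonneg hs <| s ·) hle

theorem tendsto_of_asymptoticDist_eq_zero (hs : CauchySeq s) {x : X}
    (hx : asymptoticDist s x = 0) : Tendsto s atTop (𝓝 x) := by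
  rw [tendsto_iff_dist_tendsto_zero]
  simpa only [dist_comm, hx] using tendsto_dist_asymptoticDist hs x

theorem asymptoticDist_eq_zero_of_slope_le (hs : CauchySeq s) {x : X} {ε : ℝ} (hε : ε < 1)
    (hslope : ∀ y, -asymptoticDist s y ≤ -asymptoticDist s x + ε * dist x y) :
    asymptoticDist s x = 0 := by
  have hneg : Tendsto (fun n => -asymptoticDist s (s n)) atTop (𝓝 0) := by
    simpa only [neg_zero] using (tendsto_asymptoticDist_atTop hs).neg
  have hlim : 0 ≤ -asymptoticDist s x + ε * asymptoticDist s x :=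
    le_of_tendsto_of_tendsto' hneg
      (((tendsto_dist_asymptoticDist hs x).const_mul ε).const_add _) fun n => hslope (s n)
  nlinarith [asymptoticDist_nonneg hs x]

end AsymptoticDist

/-- Converse of Ekeland's variational principle (Weston, Sullivan): if a metric
space satisfies the Ekeland maximum principle for all upper semicontinuous functions
bounded above, then it is complete. -/
theorem completeSpace_of_ekeland {X : Type*} [MetricSpace X]
    (h : ∀ u : X → ℝ, UpperSemicontinuous u → BddAbove (Set.range u) →
      ∀ ε : ℝ, 0 < ε → ∃ x : X, (⨆ y, u y) - ε < u x ∧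
        ∀ y : X, u y ≤ u x + ε * dist x y) :
    CompleteSpace X := by
  refine Metric.complete_of_cauchySeq_tendsto fun s hs => ?_
  have hbdd : BddAbove (Set.range fun x => -asymptoticDist s x) :=
    ⟨0, by rintro _ ⟨y, rfl⟩; exact neg_nonpos.mpr (asymptoticDist_nonneg hs y)⟩
  have husc : UpperSemicontinuous fun x => -asymptoticDist s x :=
    (lipschitzWith_asymptoticDist hs).continuous.neg.upperSemicontinuous
  obtain ⟨x, -, hslope⟩ := h _ husc hbdd (1 / 2) one_half_pos
  exact ⟨x, tendsto_of_asymptoticDist_eq_zero hs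
    (asymptoticDist_eq_zero_of_slope_le hs one_half_lt_one hslope)⟩
end

section
/- Let λ > 0, b ∈ ℝ, and u : (−∞, b) → ℝ a C² function with u ≥ 1, u′ > 0 on (−∞, b), and u″ ≤ λ² u. Suppose moreover 0 ∈ (−∞, b). Then u′(0) ≤ λ u(0). -/
/-!
With `w = u' - λ u` the hypothesis `u'' ≤ λ² u` reads `w' ≤ -λ w`, so `e^{λ s} w(s)` is
nonincreasing. If `w(0) > 0`, then `w > 0` on `(-∞, 0]`, i.e. `u' > λ u ≥ λ` there; but a function
whose slope stays above `λ > 0` on a left half-line is unbounded below, contradicting `u ≥ 1`.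
-/

open Real Set

theorem hasDerivAt_exp_mul_mul_deriv_sub {u : ℝ → ℝ} {lam x : ℝ}
    (hu : DifferentiableAt ℝ u x) (hu' : DifferentiableAt ℝ (deriv u) x) :
    HasDerivAt (fun s => exp (lam * s) * (deriv u s - lam * u s))
      (exp (lam * x) * (deriv (deriv u) x - lam ^ 2 * u x)) x := by
  have hexp : HasDerivAt (fun s => exp (lam * s)) (exp (lam * x) * lam) x := by
    simpa using ((hasDerivAt_id x).const_mul lam).exp
  exact (hexp.mul (hu'.hasDerivAt.sub (hu.hasDerivAt.const_mul lam))).congr_deriv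
    (by simp only [Pi.sub_apply]; ring)

theorem antitoneOn_exp_mul_mul_deriv_sub {u : ℝ → ℝ} {lam : ℝ} {D : Set ℝ}
    (hD : IsOpen D) (hD' : Convex ℝ D) (hu : DifferentiableOn ℝ u D)
    (hu' : DifferentiableOn ℝ (deriv u) D) (hu'' : ∀ x ∈ D, deriv (deriv u) x ≤ lam ^ 2 * u x) :
    AntitoneOn (fun s => exp (lam * s) * (deriv u s - lam * u s)) D := by
  have hderiv (x : ℝ) (hx : x ∈ D) := hasDerivAt_exp_mul_mul_deriv_sub (lam := lam)
    (hu.differentiableAt (hD.mem_nhds hx)) (hu'.differentiableAt (hD.mem_nhds hx))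
  refine antitoneOn_of_hasDerivWithinAt_nonpos hD'
    (fun x hx => (hderiv x hx).continuousAt.continuousWithinAt)
    (fun x hx => (hderiv x (interior_subset hx)).hasDerivWithinAt)
    (fun x hx => ?_)
  rw [hD.interior_eq] at hx
  exact mul_nonpos_of_nonneg_of_nonpos (exp_pos _).le (sub_nonpos.2 (hu'' x hx))

theorem exists_deriv_lt_of_forall_le_Iic {u : ℝ → ℝ} {a c m : ℝ} (hc : 0 < c)
    (hu : DifferentiableOn ℝ u (Iic a)) (hm : ∀ t ≤ a, m ≤ u t) :
    ∃ t ≤ a, deriv u t < c := by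
  by_contra! hslope
  set t := a - (u a - m + 1) / c
  have hta : t ≤ a := sub_le_self _ (div_nonneg (by linarith [hm a le_rfl]) hc.le)
  have hmvt := (convex_Iic a).mul_sub_le_image_sub_of_le_deriv hu.continuousOn
    (hu.mono interior_subset) (fun x hx => hslope x (mem_Iic.1 (interior_subset hx)))
    t hta a (mem_Iic.2 le_rfl) hta
  have hct : c * (a - t) = u a - m + 1 := by
    simp only [t]
    field_simp
    ring
  linarith [hm t hta]

theorem deriv_le_of_second_deriv_le_general {lam b : ℝ} (hlam : 0 < lam) (u : ℝ → ℝ)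
    (hu : ContDiffOn ℝ 2 u (Set.Iio b))
    (h1 : ∀ s < b, 1 ≤ u s)
    (h3 : ∀ s < b, deriv (deriv u) s ≤ lam ^ 2 * u s)
    (hb : (0 : ℝ) < b) :
    deriv u 0 ≤ lam * u 0 := by
  by_contra! hcon
  have hdiff : DifferentiableOn ℝ u (Iio b) := hu.differentiableOn two_ne_zero
  have hdiff' : DifferentiableOn ℝ (deriv u) (Iio b) :=
    (hu.deriv_of_isOpen isOpen_Iio (by norm_num)).differentiableOn one_ne_zero
  have hanti := antitoneOn_exp_mul_mul_deriv_sub isOpen_Iio (convex_Iio b) hdiff hdiff' h3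
  have hslope : ∀ t ≤ 0, lam < deriv u t := by
    intro t ht
    have htb : t < b := ht.trans_lt hb
    have hg : exp (lam * 0) * (deriv u 0 - lam * u 0) ≤
        exp (lam * t) * (deriv u t - lam * u t) := hanti htb hb ht
    have hwt : 0 < deriv u t - lam * u t :=
      pos_of_mul_pos_right ((mul_pos (exp_pos _) (sub_pos.2 hcon)).trans_le hg) (exp_pos _).le
    nlinarith [h1 t htb]
  obtain ⟨t, ht, hlt⟩ := exists_deriv_lt_of_forall_le_Iic hlam
    (hdiff.mono fun t ht => (mem_Iic.1 ht).trans_lt hb) fun t ht => h1 t (ht.trans_lt hb)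
  exact (hslope t ht).not_gt hlt

/-- One-dimensional comparison: if `u : (-∞, b) → ℝ` is `C²` with `u ≥ 1`, `u' > 0`
and `u'' ≤ λ² u` on `(-∞, b)`, and `0 < b`, then `u'(0) ≤ λ u(0)`. -/
theorem deriv_le_of_second_deriv_le {lam b : ℝ} (hlam : 0 < lam) (u : ℝ → ℝ)
    (hu : ContDiffOn ℝ 2 u (Set.Iio b))
    (h1 : ∀ s < b, 1 ≤ u s)
    (h2 : ∀ s < b, 0 < deriv u s)
    (h3 : ∀ s < b, deriv (deriv u) s ≤ lam ^ 2 * u s)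
    (hb : (0 : ℝ) < b) :
    deriv u 0 ≤ lam * u 0 :=
  deriv_le_of_second_deriv_le_general hlam u hu h1 h3 hb
end

section
/- Let ξ : ℝ → ℝ be continuous and non-increasing. In the jet space J = ℝ × ℝⁿ × Sym²(ℝⁿ) with coordinates (r, p, A), define E_ξ := closure{(r,p,A) : |p| < ξ(r)}. Then the Dirichlet dual satisfies Ẽ_ξ = closure{(r,p,A) : |p| > ξ(−r)}, where the Dirichlet dual of F is F̃ := −(∁ int F). -/
open scoped Pointwise
open Filter Metric

/-!
Since the Euclidean norm has no local maxima, for continuous `c` the closure of `{c < |p|}` is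
`{c ≤ |p|}`. Applied to the complement of `closure {|p| < ξ(r)} ⊆ {|p| ≤ ξ(r)}`, this shows
that `{|p| < ξ(r)}` is regular open, so `int E_ξ = {|p| < ξ(r)}`; its negated complement
`{ξ(-r) ≤ |p|}` is then the closure of `{ξ(-r) < |p|}`.
-/

/-- The Dirichlet dual of a set `F`: the complement of `-(interior F)`. -/
def dirichletDual {V : Type*} [Neg V] [TopologicalSpace V] (F : Set V) : Set V :=
  (-(interior F))ᶜ

/-- The Euclidean length of `p`. -/
noncomputable def vlen {n : ℕ} (p : Fin n → ℝ) : ℝ :=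
  Real.sqrt (∑ i, p i * p i)

theorem not_isLocalMax_norm {E : Type*} [NormedAddCommGroup E] [NormedSpace ℝ E]
    [Nontrivial E] (v : E) : ¬IsLocalMax (‖·‖) v := by
  intro hmax
  have hv : v ∈ interior (closedBall 0 ‖v‖) :=
    mem_interior_iff_mem_nhds.mpr (hmax.mono fun w hw => mem_closedBall_zero_iff.mpr hw)
  rw [interior_closedBall', mem_ball_zero_iff] at hv
  exact lt_irrefl _ hv

section StrictInequality

variable {X E Y : Type*} [TopologicalSpace X] [TopologicalSpace E] [TopologicalSpace Y]
  {c : X → ℝ} {N : E → ℝ}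

theorem closure_setOf_lt_eq_setOf_le (hc : Continuous c) (hN : Continuous N)
    (hmax : ∀ v, ¬IsLocalMax N v) :
    closure {j : X × E × Y | c j.1 < N j.2.1} = {j | c j.1 ≤ N j.2.1} := by
  refine subset_antisymm
    (closure_lt_subset_le (hc.comp continuous_fst) (hN.comp (continuous_fst.comp continuous_snd)))
    ?_
  rintro ⟨x, v, y⟩ (hle : c x ≤ N v)
  have hv : v ∈ closure {w | N v < N w} := mem_closure_iff_frequently.mpr <| by
    simpa only [IsLocalMax, IsMaxFilter, not_eventually, not_le, Set.mem_ofPred_eq] using hmax v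
  have hsub : {x} ×ˢ {w | c x < N w} ×ˢ {y} ⊆ {j : X × E × Y | c j.1 < N j.2.1} := by
    rintro ⟨x', w, y'⟩ ⟨rfl, hw, -⟩
    exact hw
  refine closure_mono hsub ?_
  rw [closure_prod_eq, closure_prod_eq]
  exact ⟨subset_closure rfl, closure_mono (fun w hw => hle.trans_lt hw) hv, subset_closure rfl⟩

theorem interior_closure_setOf_lt (hc : Continuous c) (hN : Continuous N)
    (hmax : ∀ v, ¬IsLocalMax N v) :
    interior (closure {j : X × E × Y | N j.2.1 < c j.1}) = {j | N j.2.1 < c j.1} := by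
  have hN' : Continuous fun j : X × E × Y => N j.2.1 :=
    hN.comp (continuous_fst.comp continuous_snd)
  have hc' : Continuous fun j : X × E × Y => c j.1 := hc.comp continuous_fst
  refine subset_antisymm ?_ (interior_maximal subset_closure (isOpen_lt hN' hc'))
  calc interior (closure {j : X × E × Y | N j.2.1 < c j.1})
      ⊆ interior {j : X × E × Y | c j.1 < N j.2.1}ᶜ := by
        refine interior_mono ?_
        simpa only [Set.compl_ofPred, not_lt] using closure_lt_subset_le hN' hc'
    _ = {j | N j.2.1 < c j.1} := by
        rw [interior_compl, closure_setOf_lt_eq_setOf_le hc hN hmax, Set.compl_ofPred]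
        simp only [not_le]

end StrictInequality

section EuclideanLength

variable {n : ℕ}

theorem vlen_eq_norm (p : Fin n → ℝ) :
    vlen p = ‖(WithLp.toLp 2 p : EuclideanSpace ℝ (Fin n))‖ := by
  simp [vlen, EuclideanSpace.norm_eq, sq]

theorem vlen_neg (p : Fin n → ℝ) : vlen (-p) = vlen p := by
  simp only [vlen_eq_norm, WithLp.toLp_neg, norm_neg]

theorem continuous_vlen : Continuous (vlen (n := n)) := by
  rw [show vlen (n := n) = _ from funext vlen_eq_norm]
  exact (PiLp.continuous_toLp 2 fun _ : Fin n => ℝ).norm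

theorem not_isLocalMax_vlen (hn : 0 < n) (p : Fin n → ℝ) : ¬IsLocalMax vlen p := by
  have : Nonempty (Fin n) := ⟨⟨0, hn⟩⟩
  intro hmax
  refine not_isLocalMax_norm (WithLp.toLp 2 p : EuclideanSpace ℝ (Fin n)) ?_
  simpa only [Function.comp_def, vlen_eq_norm]
    using hmax.comp_continuous (PiLp.continuous_ofLp 2 _).continuousAt

end EuclideanLength

theorem dirichletDual_eikonal_general {n : ℕ} (hn : 0 < n) (ξ : ℝ → ℝ)
    (hξc : Continuous ξ) :
    dirichletDual (closure {j : ℝ × (Fin n → ℝ) × Matrix (Fin n) (Fin n) ℝ |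
        vlen j.2.1 < ξ j.1})
      = closure {j : ℝ × (Fin n → ℝ) × Matrix (Fin n) (Fin n) ℝ |
        ξ (-j.1) < vlen j.2.1} := by
  have hmax := not_isLocalMax_vlen hn
  rw [dirichletDual, interior_closure_setOf_lt hξc continuous_vlen hmax,
    closure_setOf_lt_eq_setOf_le (c := fun r => ξ (-r)) (hξc.comp continuous_neg) continuous_vlen
      hmax]
  ext ⟨r, p, A⟩
  simp [vlen_neg]

/-- Duality for the generalized eikonal subequation: for `ξ` continuous and
non-increasing (with `ξ > 0`, or `ξ ≥ 0` vanishing exactly on `[0,∞)`), the Dirichlet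
dual of `E_ξ = closure {|p| < ξ(r)}` in the jet space `ℝ × ℝⁿ × Sym²(ℝⁿ)` is
`closure {|p| > ξ(-r)}`. -/
theorem dirichletDual_eikonal {n : ℕ} (hn : 0 < n) (ξ : ℝ → ℝ)
    (hξc : Continuous ξ) (hξm : Antitone ξ)
    (hξ : (∀ r, 0 < ξ r) ∨ ((∀ r, 0 ≤ ξ r) ∧ ξ 0 = 0 ∧ ∀ r < 0, 0 < ξ r)) :
    dirichletDual (closure {j : ℝ × (Fin n → ℝ) × Matrix (Fin n) (Fin n) ℝ |
        vlen j.2.1 < ξ j.1})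
      = closure {j : ℝ × (Fin n → ℝ) × Matrix (Fin n) (Fin n) ℝ |
        ξ (-j.1) < vlen j.2.1} :=
  dirichletDual_eikonal_general hn ξ hξc
end

section
/- Ahlfors implies Liouville: Let X be a manifold, F̃ a fiberwise subset of the jet space, and set H := F̃ ∪ {r ≤ 0}. Suppose F̃ has the Ahlfors property: for every open U ⊆ X with nonempty boundary and every u ∈ USC(closure U) bounded above, H-subharmonic on U and positive somewhere, one has sup_{∂U} u⁺ = sup_{closure U} u. Then F̃ has the Liouville property: every bounded, non-negative, F̃-subharmonic function on X is constant. -/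
open Filter Topology

/-- Jets `(r, p, A)` over a point, modelled on `ℝⁿ`. -/
abbrev Jet (n : ℕ) : Type := ℝ × (Fin n → ℝ) × Matrix (Fin n) (Fin n) ℝ

/-- `u` is `A`-subharmonic on `U` in the viscosity sense: every test function
`φ ∈ Tests` touching `u` from above at a point `x ∈ U` has jet `jet φ x ∈ A x`. -/
def IsSubharmonicOn {X : Type*} [TopologicalSpace X] {n : ℕ}
    (Tests : Set (X → ℝ)) (jet : (X → ℝ) → X → Jet n)
    (A : X → Set (Jet n)) (u : X → ℝ) (U : Set X) : Prop :=
  ∀ x ∈ U, ∀ φ ∈ Tests, φ x = u x → (∀ᶠ y in 𝓝 x, u y ≤ φ y) → jet φ x ∈ A x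

/-!
If `u` is bounded, non-negative and `F̃`-subharmonic but `u a < u b`, apply the Ahlfors
property to `U := X \ {a}`. Since `a` is not isolated, `U` is dense with boundary `{a}`,
and `u` is `H`-subharmonic on `U` (as `F̃ ⊆ H`) and positive at `b`. Hence
`sup_X u = u(a)⁺ = u a < u b`, a contradiction.
-/

theorem frontier_compl_singleton_of_not_isOpen {X : Type*} [TopologicalSpace X] [T1Space X]
    {a : X} (ha : ¬IsOpen ({a} : Set X)) : frontier ({a}ᶜ : Set X) = {a} := by
  rw [frontier, (dense_compl_singleton_iff_not_open.2 ha).closure_eq,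
    isOpen_compl_singleton.interior_eq, ← Set.compl_eq_univ_sdiff, compl_compl]

theorem IsSubharmonicOn.mono {X : Type*} [TopologicalSpace X] {n : ℕ}
    {Tests : Set (X → ℝ)} {jet : (X → ℝ) → X → Jet n} {A B : X → Set (Jet n)}
    {u : X → ℝ} {U V : Set X} (hu : IsSubharmonicOn Tests jet A u U)
    (hAB : ∀ x, A x ⊆ B x) (hVU : V ⊆ U) : IsSubharmonicOn Tests jet B u V :=
  fun x hx φ hφ heq hle => hAB x (hu x (hVU hx) φ hφ heq hle)

/-- The Ahlfors property of `F̃`, with `H := F̃ ∪ {r ≤ 0}`. -/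
def HasAhlforsProperty {X : Type*} [TopologicalSpace X] {n : ℕ}
    (Tests : Set (X → ℝ)) (jet : (X → ℝ) → X → Jet n) (Ft : X → Set (Jet n)) : Prop :=
  ∀ U : Set X, IsOpen U → (frontier U).Nonempty →
    ∀ u : X → ℝ, UpperSemicontinuousOn u (closure U) → BddAbove (u '' closure U) →
      IsSubharmonicOn Tests jet (fun x => Ft x ∪ {j : Jet n | j.1 ≤ 0}) u U →
      (∃ x ∈ closure U, 0 < u x) →
      sSup ((fun y => max (u y) 0) '' frontier U) = sSup (u '' closure U)

theorem HasAhlforsProperty.le_of_subharmonic {X : Type*} [TopologicalSpace X] [T1Space X]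
    {n : ℕ} {Tests : Set (X → ℝ)} {jet : (X → ℝ) → X → Jet n} {Ft : X → Set (Jet n)}
    (ahlfors : HasAhlforsProperty Tests jet Ft) {u : X → ℝ} (hu : UpperSemicontinuous u)
    (hb : BddAbove (Set.range u)) (hnn : ∀ x, 0 ≤ u x)
    (hsub : IsSubharmonicOn Tests jet Ft u Set.univ) {a : X} (ha : ¬IsOpen ({a} : Set X))
    (b : X) : u b ≤ u a := by
  by_contra! hab
  have hcl : closure ({a}ᶜ : Set X) = Set.univ :=
    (dense_compl_singleton_iff_not_open.2 ha).closure_eq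
  have hfr := frontier_compl_singleton_of_not_isOpen ha
  have hsup := ahlfors {a}ᶜ isOpen_compl_singleton (by rw [hfr]; exact Set.singleton_nonempty a) u
    (hu.upperSemicontinuousOn _) (by rwa [hcl, Set.image_univ])
    (hsub.mono (fun _ => Set.subset_union_left) (Set.subset_univ _))
    ⟨b, hcl ▸ Set.mem_univ b, (hnn a).trans_lt hab⟩
  rw [hfr, hcl, Set.image_univ, Set.image_singleton, csSup_singleton,
    max_eq_left (hnn a)] at hsup
  exact hab.not_ge (hsup ▸ le_csSup hb ⟨b, rfl⟩)

/-- Ahlfors implies Liouville: if `F̃` has the Ahlfors property (with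
`H := F̃ ∪ {r ≤ 0}`: for every open `U` with nonempty boundary and every
`u ∈ USC(closure U)` bounded above, `H`-subharmonic on `U` and positive somewhere,
`sup_{∂U} u⁺ = sup_{closure U} u`), then every bounded, non-negative,
`F̃`-subharmonic function on `X` is constant. Here `X` is a manifold-like space:
`T1` with no isolated points. -/
theorem ahlfors_implies_liouville {X : Type*} [TopologicalSpace X] [T1Space X] {n : ℕ}
    (hX : ∀ x : X, ¬ IsOpen ({x} : Set X))
    (Tests : Set (X → ℝ)) (jet : (X → ℝ) → X → Jet n)
    (Ft : X → Set (Jet n))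
    (ahlfors : ∀ U : Set X, IsOpen U → (frontier U).Nonempty →
      ∀ u : X → ℝ, UpperSemicontinuousOn u (closure U) → BddAbove (u '' closure U) →
        IsSubharmonicOn Tests jet (fun x => Ft x ∪ {j : Jet n | j.1 ≤ 0}) u U →
        (∃ x ∈ closure U, 0 < u x) →
        sSup ((fun y => max (u y) 0) '' frontier U) = sSup (u '' closure U)) :
    ∀ u : X → ℝ, UpperSemicontinuous u → BddAbove (Set.range u) → (∀ x, 0 ≤ u x) →
      IsSubharmonicOn Tests jet Ft u Set.univ → ∀ x y, u x = u y := by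
  have ahlfors : HasAhlforsProperty Tests jet Ft := ahlfors
  intro u hu hb hnn hsub x y
  exact le_antisymm (ahlfors.le_of_subharmonic hu hb hnn hsub (hX y) x)
    (ahlfors.le_of_subharmonic hu hb hnn hsub (hX x) y)
end

section
/- Theorem-on-sums contradiction for quasilinear operators with bounded coefficients (Euclidean one-point version): Let f : ℝ → ℝ be strictly increasing and continuous, λ₁ ≥ 0, λ₂ > 0 bounded continuous functions on [0,∞), T(p) := λ₁(|p|)Π_p + λ₂(|p|)Π_{p⊥} for p ≠ 0, and R > 0. Suppose c₀ > 0 and there exist sequences r_α, s_α ∈ [−R, R], p_α ∈ ℝⁿ \ {0}, symmetric matrices A_α, B_α, and κ ≥ 0, δ_α → 0 with: tr(T(p_α)A_α) ≥ f(r_α); tr(T(p_α)(κ δ_α I − A_α)) ≥ −f(r_α − c_α) with c_α ↓ c₀ > 0 (here B_α = κδ_α I − A_α after parallel transport). Then summing yields κ δ_α · tr(T(p_α)) ≥ f(r_α) − f(r_α − c_α) ≥ inf_{|r| ≤ R}(f(r) − f(r − c₀/2)) > 0 for large α, while the left side tends to 0 since tr T(p) ≤ λ₁(|p|) + (n−1)λ₂(|p|)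 is bounded — a contradiction. Conclude: no such sequences exist. -/
/-!
Adding the two trace inequalities cancels `A_α` and leaves
`f(r_α) - f(r_α - c_α) ≤ κ δ_α tr T(p_α)`. Since `c_α ≥ c₀`, the left side is at least the
minimum `ε > 0` of `r ↦ f r - f (r - c₀)` over the compact interval `[-R, R]`, while the right
side tends to `0` because `tr T(p) = λ₁(|p|) + (n - 1) λ₂(|p|)` is bounded.
-/

open Filter Topology

/-- Orthogonal projection (as a matrix) onto the line spanned by `p`. -/
noncomputable def projLine {n : ℕ} (p : Fin n → ℝ) : Matrix (Fin n) (Fin n) ℝ :=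
  (∑ i, p i * p i)⁻¹ • Matrix.vecMulVec p p

/-- The coefficient matrix `T(p) = λ₁(|p|) Π_p + λ₂(|p|) Π_{p⊥}` of a quasilinear
operator. -/
noncomputable def Tcoef {n : ℕ} (lam1 lam2 : ℝ → ℝ) (p : Fin n → ℝ) :
    Matrix (Fin n) (Fin n) ℝ :=
  lam1 (Real.sqrt (∑ i, p i * p i)) • projLine p +
    lam2 (Real.sqrt (∑ i, p i * p i)) • ((1 : Matrix (Fin n) (Fin n) ℝ) - projLine p)

theorem projLine_trace {n : ℕ} {p : Fin n → ℝ} (hp : p ≠ 0) : (projLine p).trace = 1 := by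
  have hsum : ∑ i, p i * p i ≠ 0 := dotProduct_self_eq_zero.not.mpr hp
  rw [projLine, Matrix.trace_smul, Matrix.trace_vecMulVec, dotProduct, smul_eq_mul,
    inv_mul_cancel₀ hsum]

theorem Tcoef_trace {n : ℕ} (lam1 lam2 : ℝ → ℝ) {p : Fin n → ℝ} (hp : p ≠ 0) :
    (Tcoef lam1 lam2 p).trace = lam1 (Real.sqrt (∑ i, p i * p i)) +
      ((n : ℝ) - 1) * lam2 (Real.sqrt (∑ i, p i * p i)) := by
  simp only [Tcoef, Matrix.trace_add, Matrix.trace_smul, Matrix.trace_sub, Matrix.trace_one,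
    projLine_trace hp, Fintype.card_fin, smul_eq_mul]
  ring

theorem abs_Tcoef_trace_le {n : ℕ} {lam1 lam2 : ℝ → ℝ} {M : ℝ}
    (h1 : ∀ t, 0 ≤ t → 0 ≤ lam1 t) (h2 : ∀ t, 0 ≤ t → 0 ≤ lam2 t)
    (hM1 : ∀ t, 0 ≤ t → lam1 t ≤ M) (hM2 : ∀ t, 0 ≤ t → lam2 t ≤ M)
    {p : Fin n → ℝ} (hp : p ≠ 0) : |(Tcoef lam1 lam2 p).trace| ≤ n * M := by
  have hn : (1 : ℝ) ≤ n :=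
    Nat.one_le_cast.mpr (Fin.pos_iff_nonempty.mpr ⟨(Function.ne_iff.mp hp).choose⟩)
  set s := Real.sqrt (∑ i, p i * p i)
  have hs : 0 ≤ s := Real.sqrt_nonneg _
  have h1s := h1 s hs
  have h2s := h2 s hs
  have hM1s := hM1 s hs
  have hM2s := hM2 s hs
  rw [Tcoef_trace lam1 lam2 hp, abs_le]
  constructor <;> nlinarith

theorem Matrix.trace_mul_smul_one_sub {n R : Type*} [Fintype n] [DecidableEq n] [CommRing R]
    (T A : Matrix n n R) (a : R) :
    (T * (a • (1 : Matrix n n R) - A)).trace = a * T.trace - (T * A).trace := by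
  rw [Matrix.mul_sub, Matrix.trace_sub, Matrix.mul_smul, Matrix.mul_one, Matrix.trace_smul,
    smul_eq_mul]

theorem StrictMono.exists_pos_forall_le_sub_of_isCompact {f : ℝ → ℝ} (hf : StrictMono f)
    (hfc : Continuous f) {K : Set ℝ} (hK : IsCompact K) {c : ℝ} (hc : 0 < c) :
    ∃ ε, 0 < ε ∧ ∀ r ∈ K, ε ≤ f r - f (r - c) :=
  hK.exists_forall_le' (by fun_prop) fun r _ => sub_pos.mpr (hf (by linarith))

theorem no_theorem_on_sums_sequences_general {n : ℕ} (f lam1 lam2 : ℝ → ℝ)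
    (hf : StrictMono f) (hfc : Continuous f)
    (h1 : ∀ t, 0 ≤ t → 0 ≤ lam1 t) (h2 : ∀ t, 0 ≤ t → 0 < lam2 t)
    (M : ℝ) (hM1 : ∀ t, 0 ≤ t → lam1 t ≤ M) (hM2 : ∀ t, 0 ≤ t → lam2 t ≤ M)
    (R : ℝ) (c₀ : ℝ) (hc₀ : 0 < c₀) (κ : ℝ) :
    ¬ ∃ (r c δ : ℕ → ℝ) (p : ℕ → (Fin n → ℝ))
        (A : ℕ → Matrix (Fin n) (Fin n) ℝ),
      (∀ α, |r α| ≤ R) ∧ (∀ α, p α ≠ 0) ∧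
      Antitone c ∧ Tendsto c atTop (𝓝 c₀) ∧ (∀ α, c₀ ≤ c α) ∧
      Tendsto δ atTop (𝓝 0) ∧
      (∀ α, f (r α) ≤ (Tcoef lam1 lam2 (p α) * A α).trace) ∧
      (∀ α, -f (r α - c α) ≤
        (Tcoef lam1 lam2 (p α) *
          ((κ * δ α) • (1 : Matrix (Fin n) (Fin n) ℝ) - A α)).trace) := by
  rintro ⟨r, c, δ, p, A, hrR, hp, -, -, hc, hδ, hA, hB⟩
  obtain ⟨ε, hε, hεle⟩ :=
    hf.exists_pos_forall_le_sub_of_isCompact hfc (isCompact_Icc (a := -R) (b := R)) hc₀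
  have hsum : ∀ α, ε ≤ κ * δ α * (Tcoef lam1 lam2 (p α)).trace := fun α => by
    have hεα := hεle (r α) (abs_le.mp (hrR α))
    have hmono := hf.monotone (sub_le_sub_left (hc α) (r α))
    have hBα := hB α
    rw [Matrix.trace_mul_smul_one_sub] at hBα
    linarith [hA α]
  have hκδ : Tendsto (fun α => κ * δ α) atTop (𝓝 0) := by simpa using hδ.const_mul κ
  have hlim : Tendsto (fun α => κ * δ α * (Tcoef lam1 lam2 (p α)).trace) atTop (𝓝 0) :=
    hκδ.zero_mul_isBoundedUnder_le <| isBoundedUnder_of ⟨n * M, fun α =>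
      abs_Tcoef_trace_le h1 (fun t ht => (h2 t ht).le) hM1 hM2 (hp α)⟩
  obtain ⟨α, hα⟩ := (hlim.eventually_lt_const hε).exists
  exact (hsum α).not_gt hα

/-- Theorem-on-sums contradiction for quasilinear operators with bounded
coefficients: for `f` strictly increasing continuous and `λ₁ ≥ 0`, `λ₂ > 0` bounded
continuous, there are no sequences `r_α, c_α, δ_α, p_α ≠ 0, A_α` with `|r_α| ≤ R`,
`c_α ↓ c₀ > 0`, `δ_α → 0`, `tr(T(p_α)A_α) ≥ f(r_α)` and
`tr(T(p_α)(κδ_α·I − A_α)) ≥ −f(r_α − c_α)`. -/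
theorem no_theorem_on_sums_sequences {n : ℕ} (f lam1 lam2 : ℝ → ℝ)
    (hf : StrictMono f) (hfc : Continuous f)
    (h1c : Continuous lam1) (h2c : Continuous lam2)
    (h1 : ∀ t, 0 ≤ t → 0 ≤ lam1 t) (h2 : ∀ t, 0 ≤ t → 0 < lam2 t)
    (M : ℝ) (hM1 : ∀ t, 0 ≤ t → lam1 t ≤ M) (hM2 : ∀ t, 0 ≤ t → lam2 t ≤ M)
    (R : ℝ) (hR : 0 < R) (c₀ : ℝ) (hc₀ : 0 < c₀) (κ : ℝ) (hκ : 0 ≤ κ) :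
    ¬ ∃ (r c δ : ℕ → ℝ) (p : ℕ → (Fin n → ℝ))
        (A : ℕ → Matrix (Fin n) (Fin n) ℝ),
      (∀ α, |r α| ≤ R) ∧ (∀ α, p α ≠ 0) ∧
      Antitone c ∧ Tendsto c atTop (𝓝 c₀) ∧ (∀ α, c₀ ≤ c α) ∧
      Tendsto δ atTop (𝓝 0) ∧
      (∀ α, f (r α) ≤ (Tcoef lam1 lam2 (p α) * A α).trace) ∧
      (∀ α, -f (r α - c α) ≤
        (Tcoef lam1 lam2 (p α) *
          ((κ * δ α) • (1 : Matrix (Fin n) (Fin n) ℝ) - A α)).trace) :=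
  no_theorem_on_sums_sequences_general f lam1 lam2 hf hfc h1 h2 M hM1 hM2 R c₀ hc₀ κ
end
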